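/- For every nonnegative integer n, the number of prime non-overlined parts (counted with multiplicity) in all the overpartitions of n equals ∑_{j=2}^{n} ω(j) · p̄(n−j), where ω(j) is the number of distinct prime divisors of j. -/

import Mathlib

/-- An overpartition of `n`: a pair consisting of a multiset of overlined parts (pairwise
distinct) and a multiset of non-overlined parts, all parts positive, with total sum `n`. -/
structure Overpartition (n : ℕ) where
  overlined : Multiset ℕ
  nonoverlined : Multiset ℕ
  overlined_nodup : overlined.Nodup
  overlined_pos : ∀ i ∈ overlined, 0 < i
  nonoverlined_pos : ∀ i ∈ nonoverlined, 0 < i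
  parts_sum : overlined.sum + nonoverlined.sum = n

/-- There are only finitely many overpartitions of `n`. -/
instance (n : ℕ) : Finite (Overpartition n) := by
  classical
  set big : Multiset ℕ := n • ((Multiset.range (n + 1))) with hbig
  have key : ∀ (m : Multiset ℕ), (∀ i ∈ m, 0 < i) → m.sum ≤ n → m ≤ big := by
    intro m hpos hsum
    rw [Multiset.le_iff_count]
    intro a
    rw [hbig, Multiset.count_nsmul]
    by_cases ha : a ∈ m
    · have ha1 : 0 < a := hpos a ha
      have hale : a ≤ m.sum := Multiset.le_sum_of_mem ha
      have hcard : m.card ≤ m.sum := by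
        have := Multiset.card_nsmul_le_sum (s := m) (a := 1) (fun i hi => hpos i hi)
        simpa using this
      have hcnt : m.count a ≤ m.card := Multiset.count_le_card a m
      have haa : a ∈ Multiset.range (n + 1) := Multiset.mem_range.2 (by omega)
      have h1 : Multiset.count a (Multiset.range (n + 1)) = 1 :=
        Multiset.count_eq_one_of_mem (Multiset.nodup_range _) haa
      rw [h1]
      omega
    · simp [Multiset.count_eq_zero.2 ha]
  have hinj : Function.Injective (fun o : Overpartition n =>
      ((⟨o.overlined, Multiset.mem_powerset.2
          (key _ o.overlined_pos (by have := o.parts_sum; omega))⟩,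
        ⟨o.nonoverlined, Multiset.mem_powerset.2
          (key _ o.nonoverlined_pos (by have := o.parts_sum; omega))⟩) :
        {m // m ∈ big.powerset} × {m // m ∈ big.powerset})) := by
    intro a b h
    cases a; cases b
    simp_all
  exact Finite.of_injective _ hinj

/-- `S k n`: the total number of non-overlined parts equal to `k`, counted with
multiplicity, in all the overpartitions of `n`. -/
noncomputable def S (k n : ℕ) : ℕ := ∑ᶠ o : Overpartition n, o.nonoverlined.count k

/-- `pbar n`: the number of overpartitions of `n` (`pbar 0 = 1`). -/
noncomputable def pbar (n : ℕ) : ℕ := Nat.card (Overpartition n)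

/-- The multiset of all parts (overlined and non-overlined) of an overpartition. -/
def Overpartition.parts {n : ℕ} (o : Overpartition n) : Multiset ℕ :=
  o.overlined + o.nonoverlined

/-- `Mbar k n`: the number of overpartitions of `n` in which the first (i.e. largest) part
larger than `k` appears at least `k + 1` times. -/
noncomputable def Mbar (k n : ℕ) : ℕ :=
  Nat.card {o : Overpartition n // ∃ s ∈ o.parts, k < s ∧
    (∀ t ∈ o.parts, k < t → t ≤ s) ∧ k + 1 ≤ o.parts.count s}

/-- `A(χ,1,0;m) = ∑_{k=1}^{m} S(k,m) χ(k)`, the number of prime non-overlined parts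
(counted with multiplicity) in all the overpartitions of `m`. -/
noncomputable def Achi (m : ℕ) : ℕ :=
  ∑ k ∈ Finset.Icc 1 m, S k m * (if Nat.Prime k then 1 else 0)

/-- `A(χ,1,0;·)` extended to integer arguments: terms with negative argument are zero. -/
noncomputable def Achiz (m : ℤ) : ℤ := if 0 ≤ m then (Achi m.toNat : ℤ) else 0


/-!
Adjoining `m` non-overlined parts `k` is a bijection from the overpartitions of `n - m k` onto
those of `n` having at least `m` non-overlined parts `k`. Counting the parts `k` of each
overpartition in layers therefore gives `S(k, n) = ∑_{m ≥ 1} p̄(n - m k) = ∑_{k ∣ j ≤ n} p̄(n - j)`.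
Summing over the primes `k` and exchanging the two sums, each `j` is counted once for every
prime dividing it.
-/

open Finset

theorem Multiset.count_mul_le_sum (s : Multiset ℕ) (k : ℕ) : s.count k * k ≤ s.sum := by
  obtain ⟨t, ht⟩ := le_iff_exists_add.1 (le_count_iff_replicate_le.1 (le_refl (s.count k)))
  calc s.count k * k = (replicate (s.count k) k).sum := by simp
    _ ≤ (replicate (s.count k) k + t).sum := by rw [sum_add]; exact Nat.le_add_right _ _
    _ = s.sum := by rw [← ht]

theorem Finset.sum_eq_sum_Icc_card_filter_le {α : Type*} (s : Finset α) (f : α → ℕ) {N : ℕ}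
    (hf : ∀ a ∈ s, f a ≤ N) : ∑ a ∈ s, f a = ∑ m ∈ Icc 1 N, #{a ∈ s | m ≤ f a} := by
  simp_rw [card_filter]
  rw [sum_comm]
  refine sum_congr rfl fun a ha => ?_
  have hfilter : {m ∈ Icc 1 N | m ≤ f a} = Icc 1 (f a) := by
    ext m
    simp only [mem_filter, mem_Icc]
    have := hf a ha
    omega
  rw [← card_filter, hfilter, Nat.card_Icc, Nat.add_sub_cancel]

theorem Nat.mem_primeFactors_and_mem_Icc_iff {n p j : ℕ} :
    p ∈ j.primeFactors ∧ j ∈ Icc 1 n ↔ (p ∈ Icc 1 n ∧ p.Prime) ∧ (j ∈ Icc 1 n ∧ p ∣ j) := by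
  simp only [mem_Icc, Nat.mem_primeFactors]
  constructor
  · rintro ⟨⟨hp, hpj, hj0⟩, hj⟩
    exact ⟨⟨⟨hp.one_lt.le, (Nat.le_of_dvd (by omega) hpj).trans hj.2⟩, hp⟩, hj, hpj⟩
  · rintro ⟨⟨-, hp⟩, hj, hpj⟩
    exact ⟨⟨hp, hpj, by omega⟩, hj⟩

namespace Overpartition

variable {n k : ℕ}

theorem ext {a b : Overpartition n} (h₁ : a.overlined = b.overlined)
    (h₂ : a.nonoverlined = b.nonoverlined) : a = b := by
  cases a; cases b; simp_all

theorem count_nonoverlined_mul_le (o : Overpartition n) (k : ℕ) :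
    o.nonoverlined.count k * k ≤ n :=
  (o.nonoverlined.count_mul_le_sum k).trans ((Nat.le_add_left _ _).trans_eq o.parts_sum)

def addReplicateEquiv (hk : 0 < k) (m : ℕ) :
    Overpartition n ≃ {o : Overpartition (n + m * k) // m ≤ o.nonoverlined.count k} where
  toFun o := ⟨⟨o.overlined, o.nonoverlined + Multiset.replicate m k, o.overlined_nodup,
      o.overlined_pos,
      fun i hi => (Multiset.mem_add.1 hi).elim (o.nonoverlined_pos i)
        fun h => (Multiset.eq_of_mem_replicate h) ▸ hk,
      by rw [Multiset.sum_add, Multiset.sum_replicate, smul_eq_mul, ← add_assoc, o.parts_sum]⟩,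
    by simp⟩
  invFun o :=
    have hle := Multiset.le_count_iff_replicate_le.1 o.2
    ⟨o.1.overlined, o.1.nonoverlined - Multiset.replicate m k, o.1.overlined_nodup,
      o.1.overlined_pos,
      fun i hi => o.1.nonoverlined_pos i (Multiset.mem_of_le (Multiset.sub_le_self _ _) hi),
      by
        have hsum := congrArg Multiset.sum (tsub_add_cancel_of_le hle)
        rw [Multiset.sum_add, Multiset.sum_replicate, smul_eq_mul] at hsum
        have := o.1.parts_sum
        omega⟩
  left_inv o := ext rfl (add_tsub_cancel_right _ _)
  right_inv o := Subtype.ext <| ext rfl <|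
    tsub_add_cancel_of_le (Multiset.le_count_iff_replicate_le.1 o.2)

theorem card_le_count_nonoverlined_eq_pbar (hk : 0 < k) {m : ℕ} (h : m * k ≤ n) :
    Nat.card {o : Overpartition n // m ≤ o.nonoverlined.count k} = pbar (n - m * k) := by
  obtain ⟨r, rfl⟩ := Nat.exists_eq_add_of_le' h
  rw [Nat.add_sub_cancel, pbar, Nat.card_congr (addReplicateEquiv hk m)]

end Overpartition

open Overpartition in
theorem S_eq_sum_Icc_div_pbar {k : ℕ} (hk : 0 < k) (n : ℕ) :
    S k n = ∑ m ∈ Icc 1 (n / k), pbar (n - m * k) := by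
  let _ : Fintype (Overpartition n) := Fintype.ofFinite _
  rw [S, finsum_eq_sum_of_fintype, sum_eq_sum_Icc_card_filter_le _ _ fun o _ =>
    (Nat.le_div_iff_mul_le hk).2 (count_nonoverlined_mul_le o k)]
  refine sum_congr rfl fun m hm => ?_
  rw [← card_le_count_nonoverlined_eq_pbar hk, Nat.card_eq_fintype_card, Fintype.card_subtype]
  exact (Nat.le_div_iff_mul_le hk).1 (mem_Icc.1 hm).2

theorem S_eq_sum_dvd_pbar {k : ℕ} (hk : 0 < k) (n : ℕ) :
    S k n = ∑ j ∈ Icc 1 n with k ∣ j, pbar (n - j) := by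
  rw [S_eq_sum_Icc_div_pbar hk]
  refine sum_nbij' (· * k) (· / k) ?_ ?_ ?_ ?_ fun _ _ => rfl
  · intro m hm
    simp only [mem_filter, mem_Icc] at hm ⊢
    exact ⟨⟨Nat.mul_pos hm.1 hk, (Nat.le_div_iff_mul_le hk).1 hm.2⟩, dvd_mul_left k m⟩
  · intro j hj
    simp only [mem_filter, mem_Icc] at hj ⊢
    exact ⟨Nat.div_pos (Nat.le_of_dvd (by omega) hj.2) hk, Nat.div_le_div_right hj.1.2⟩
  · intro m _
    exact Nat.mul_div_cancel m hk
  · intro j hj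
    exact Nat.div_mul_cancel (mem_filter.1 hj).2

theorem stmt12 (n : ℕ) :
    Achi n = ∑ j ∈ Finset.Icc 2 n, (Nat.primeFactors j).card * pbar (n - j) := by
  have hone : ∀ j ∈ Icc 1 n, j ∉ Icc 2 n → j.primeFactors.card * pbar (n - j) = 0 := by
    intro j hj hj2
    obtain rfl : j = 1 := by simp only [mem_Icc] at hj hj2; omega
    simp
  calc Achi n = ∑ p ∈ Icc 1 n with p.Prime, S p n := by
        rw [Achi, sum_filter]; simp_rw [mul_ite, mul_one, mul_zero]
    _ = ∑ p ∈ Icc 1 n with p.Prime, ∑ j ∈ Icc 1 n with p ∣ j, pbar (n - j) :=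
        sum_congr rfl fun p hp => S_eq_sum_dvd_pbar (mem_filter.1 hp).2.pos n
    _ = ∑ j ∈ Icc 1 n, ∑ p ∈ j.primeFactors, pbar (n - j) :=
        sum_comm' fun p j => by
          simp only [mem_filter]; exact Nat.mem_primeFactors_and_mem_Icc_iff.symm
    _ = ∑ j ∈ Icc 1 n, j.primeFactors.card * pbar (n - j) := by
        simp_rw [sum_const, smul_eq_mul]
    _ = ∑ j ∈ Icc 2 n, j.primeFactors.card * pbar (n - j) :=
        (sum_subset (Icc_subset_Icc_left one_le_two) hone).symm
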